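/- Let N_1,...,N_k be a sequence of n×n Boolean matrices (n ≥ 2) such that N_1 is the all-ones matrix, and for each l ≥ 2, N_l differs from N_{l-1} in at most one entry that changes from 1 to 0 (other entries may change from 0 to 1, but at most one entry changes from 1 to 0). Let l be the least index such that N_l has a 0 in every row or a 0 in every column. If N_l has a 0 in every row, then N_l also has a 1 in every row. -/
import Mathlib


/-- Let `N 1, …, N k` be `n × n` Boolean matrices (`n ≥ 2`, entry `true` = 1,
`false` = 0) with `N 1` all-ones, and where each step changes at most one entry
from 1 to 0.  If `l` is the least index at which the matrix has a 0 in every row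
or a 0 in every column, and `N l` has a 0 in every row, then `N l` also has a 1
in every row. -/
theorem each_row_has_one (n k : ℕ) (hn : 2 ≤ n)
    (N : ℕ → Fin n × Fin n → Bool)
    (h1 : ∀ p, N 1 p = true)
    (hstep : ∀ l, 2 ≤ l → l ≤ k →
      ∀ p q, N (l - 1) p = true → N l p = false →
             N (l - 1) q = true → N l q = false → p = q)
    (l : ℕ) (hl1 : 1 ≤ l) (hlk : l ≤ k)
    (hP : (∀ r : Fin n, ∃ c : Fin n, N l (r, c) = false) ∨
          (∀ c : Fin n, ∃ r : Fin n, N l (r, c) = false))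
    (hmin : ∀ m, 1 ≤ m → m < l →
      ¬ ((∀ r : Fin n, ∃ c : Fin n, N m (r, c) = false) ∨
         (∀ c : Fin n, ∃ r : Fin n, N m (r, c) = false)))
    (hrow : ∀ r : Fin n, ∃ c : Fin n, N l (r, c) = false) :
    ∀ r : Fin n, ∃ c : Fin n, N l (r, c) = true := by
  -- first, l ≥ 2
  have hn1 : 0 < n := by omega
  have hl2 : 2 ≤ l := by
    rcases Nat.lt_or_ge l 2 with h | h
    · interval_cases l
      · exfalso
        obtain ⟨c, hc⟩ := hrow ⟨0, hn1⟩
        rw [h1] at hc; exact absurd hc (by simp)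
    · exact h
  -- minimality at l - 1 gives an all-true row r0 and all-true column c0
  have hm := hmin (l - 1) (by omega) (by omega)
  push_neg at hm
  obtain ⟨⟨r0, hr0⟩, ⟨c0, hc0⟩⟩ := hm
  have hr0' : ∀ c : Fin n, N (l - 1) (r0, c) = true := fun c => by
    have := hr0 c; revert this; cases N (l - 1) (r0, c) <;> simp
  have hc0' : ∀ r : Fin n, N (l - 1) (r, c0) = true := fun r => by
    have := hc0 r; revert this; cases N (l - 1) (r, c0) <;> simp
  intro r
  by_contra hall
  push_neg at hall
  have hall' : ∀ c : Fin n, N l (r, c) = false := fun c => by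
    have := hall c; revert this; cases N l (r, c) <;> simp
  by_cases hrr : r = r0
  · subst hrr
    have c1 : Fin n := ⟨0, hn1⟩
    have hne : (⟨0, hn1⟩ : Fin n) ≠ ⟨1, by omega⟩ := by
      intro h; exact absurd (Fin.mk.injEq .. ▸ h) (by simp)
    have := hstep l hl2 hlk (r, ⟨0, hn1⟩) (r, ⟨1, by omega⟩)
      (hr0' _) (hall' _) (hr0' _) (hall' _)
    simp only [Prod.mk.injEq] at this
    exact hne this.2
  · obtain ⟨c, hc⟩ := hrow r0
    have := hstep l hl2 hlk (r, c0) (r0, c)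
      (hc0' r) (hall' c0) (hr0' c) hc
    simp only [Prod.mk.injEq] at this
    exact hrr this.1
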